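/- arXiv:1302.1458 — 3 statements merged into one kernel-verified Lean document; each statement's English description precedes it below -/
import Mathlib

section
/- Let Γ be a countable set with metric ρ, and let H be a bounded self-adjoint operator on ℓ²(Γ) whose matrix entries satisfy S_α = sup_x Σ_{y≠x} |H(x,y)| e^{α ρ(x,y)} < ∞ for some α > 0. Then for any z ∉ σ(H) with Δ = dist(z, σ(H)) > 0 and any x, y ∈ Γ, the resolvent entries satisfy |(H−z)⁻¹(x,y)| ≤ (2/Δ)·exp(−(αΔ/(Δ+2S_α))·ρ(x,y)). -/
/-!
Combes–Thomas argument. Let `c = Δ / (Δ + 2S)` and `m u = min (ρ(u, y), ρ(x, y))`, a bounded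
1-Lipschitz function, and let `W` be multiplication by `exp (α c m)`. The kernel of
`K = W H W⁻¹ - H` is `H(u, v) (exp (α c (m u - m v)) - 1)`, which by convexity of `exp` is at most
`c |H(u, v)| exp (α ρ(u, v))` in modulus; the Schur test gives `‖K‖ ≤ c S`. As `H` is self-adjoint,
`‖(H - z)⁻¹‖ ≤ 1/Δ`, so `‖(H - z)⁻¹ K‖ ≤ 1/2` and `W (H - z)⁻¹ W⁻¹ = (H - z + K)⁻¹` has norm at most
`2/Δ`. Its `(x, y)` entry is `exp (α c ρ(x, y)) (H - z)⁻¹(x, y)`.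
-/

open scoped ENNReal NNReal

theorem ENNReal.tsum_coe_mul_sq_le {ι : Type*} (a b : ι → ℝ≥0) :
    (∑' i, (a i * b i : ℝ≥0∞)) ^ 2 ≤ (∑' i, (a i : ℝ≥0∞)) * ∑' i, (a i * b i ^ 2 : ℝ≥0∞) := by
  refine le_of_tendsto' (((ENNReal.continuous_pow 2).tendsto _).comp ENNReal.summable.hasSum)
    fun s => ?_
  calc (∑ i ∈ s, (a i * b i : ℝ≥0∞)) ^ 2 = ((∑ i ∈ s, a i * b i) ^ 2 : ℝ≥0) := by push_cast; rfl
    _ ≤ ((∑ i ∈ s, a i) * ∑ i ∈ s, a i * b i ^ 2 : ℝ≥0) := by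
        gcongr
        exact Finset.sum_sq_le_sum_mul_sum_of_sq_le_mul s (fun _ _ => zero_le)
          (fun _ _ => zero_le) fun i _ => le_of_eq (by ring)
    _ = (∑ i ∈ s, (a i : ℝ≥0∞)) * ∑ i ∈ s, (a i * b i ^ 2 : ℝ≥0∞) := by push_cast; rfl
    _ ≤ _ := mul_le_mul' (ENNReal.sum_le_tsum s) (ENNReal.sum_le_tsum s)

theorem Real.abs_exp_sub_one_le_exp_abs_sub_one (s : ℝ) : |exp s - 1| ≤ exp |s| - 1 := by
  rcases le_total 0 s with hs | hs
  · rw [abs_of_nonneg hs, abs_of_nonneg (by linarith [one_le_exp hs])]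
  · rw [abs_of_nonpos hs, abs_of_nonpos (by linarith [exp_le_one_iff.2 hs])]
    linarith [add_one_le_exp s, add_one_le_exp (-s)]

theorem Real.abs_exp_sub_one_le_mul_exp {s c t : ℝ} (hc₀ : 0 ≤ c) (hc₁ : c ≤ 1)
    (hs : |s| ≤ c * t) : |exp s - 1| ≤ c * exp t := by
  have hconv : exp (c * t) ≤ c * exp t + (1 - c) := by
    simpa using convexOn_exp.2 (Set.mem_univ t) (Set.mem_univ 0) hc₀ (sub_nonneg.2 hc₁) (by ring)
  calc |exp s - 1| ≤ exp |s| - 1 := abs_exp_sub_one_le_exp_abs_sub_one s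
    _ ≤ exp (c * t) - 1 := by gcongr
    _ ≤ c * exp t := by linarith

theorem IsStarNormal.norm_le_inv_infDist {A : Type*} [CStarAlgebra A] {a : A} [IsStarNormal a]
    {z : ℂ} {r : A} (hr₁ : r * (a - z • 1) = 1) (hr₂ : (a - z • 1) * r = 1)
    (hΔ : 0 < Metric.infDist z (spectrum ℂ a)) : ‖r‖ ≤ (Metric.infDist z (spectrum ℂ a))⁻¹ := by
  let u : Aˣ := ⟨a - z • 1, r, hr₂, hr₁⟩
  have : IsStarNormal (u : A) :=
    Commute.isStarNormal_sub (by simpa using (Commute.one_right a).smul_right (star z))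
  have : IsStarNormal r := IsStarNormal.val_inv (x := u)
  rw [← ENNReal.ofReal_le_ofReal_iff (by positivity), ofReal_norm, enorm_eq_nnnorm,
    ← IsStarNormal.spectralRadius_eq_nnnorm]
  refine iSup₂_le fun k hk => ?_
  obtain ⟨l, hl, hlk⟩ : ∃ l ∈ spectrum ℂ a, k⁻¹ = l - z := by
    have hk' : k ∈ spectrum ℂ (↑u⁻¹ : A) := hk
    rw [← spectrum.map_inv, Set.mem_inv] at hk'
    change k⁻¹ ∈ spectrum ℂ (a - z • 1) at hk'
    rw [← Algebra.algebraMap_eq_smul_one, ← spectrum.sub_singleton_eq] at hk'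
    obtain ⟨l, hl, _, rfl, h⟩ := Set.mem_sub.1 hk'
    exact ⟨l, hl, h.symm⟩
  have hdist : Metric.infDist z (spectrum ℂ a) ≤ ‖k‖⁻¹ := by
    rw [← norm_inv, hlk, ← dist_eq_norm, dist_comm]
    exact Metric.infDist_le_dist_of_mem hl
  rw [← enorm_eq_nnnorm, ← ofReal_norm]
  exact ENNReal.ofReal_le_ofReal (le_inv_of_le_inv₀ hΔ hdist)

theorem norm_le_two_mul_of_mul_add_eq_one {A : Type*} [NormedRing A] {B K R X : A}
    (hR : R * B = 1) (hX : (B + K) * X = 1) (hRK : ‖R‖ * ‖K‖ ≤ 1 / 2) : ‖X‖ ≤ 2 * ‖R‖ := by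
  have hX_eq : X = R - R * K * X :=
    calc X = R * B * X := by rw [hR, one_mul]
      _ = R * (1 - K * X) := by rw [mul_assoc, ← hX, add_mul, add_sub_cancel_right]
      _ = R - R * K * X := by rw [mul_sub, mul_one, mul_assoc]
  have : ‖X‖ ≤ ‖R‖ + ‖R‖ * ‖K‖ * ‖X‖ :=
    calc ‖X‖ = ‖R - R * K * X‖ := congrArg _ hX_eq
      _ ≤ ‖R‖ + ‖R * K * X‖ := norm_sub_le _ _
      _ ≤ ‖R‖ + ‖R‖ * ‖K‖ * ‖X‖ := by gcongr; exact norm_mul₃_le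
  nlinarith [norm_nonneg X]

theorem norm_mul_mul_le_two_mul {A : Type*} [NormedRing A] {B R W W' : A} (hRB : R * B = 1)
    (hBR : B * R = 1) (hWW' : W * W' = 1) (hW'W : W' * W = 1)
    (hK : ‖R‖ * ‖W * B * W' - B‖ ≤ 1 / 2) : ‖W * R * W'‖ ≤ 2 * ‖R‖ := by
  refine norm_le_two_mul_of_mul_add_eq_one hRB ?_ hK
  calc (B + (W * B * W' - B)) * (W * R * W') = W * (B * (W' * W) * R) * W' := by
        rw [add_sub_cancel]; simp only [mul_assoc]
    _ = 1 := by rw [hW'W, mul_one, hBR, mul_one, hWW']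

theorem tsum_enorm_le_ofReal_of_eq_zero {ι E : Type*} [SeminormedAddCommGroup E] {f : ι → E}
    {b : ι → ℝ} {j : ι} {S : ℝ} (hfj : f j = 0) (hfb : ∀ i, ‖f i‖ ≤ b i)
    (hb : Summable fun i : {i // i ≠ j} => b i) (hbS : ∑' i : {i // i ≠ j}, b i ≤ S) :
    ∑' i, ‖f i‖ₑ ≤ ENNReal.ofReal S := by
  have hsupp : Function.support (fun i => ‖f i‖ₑ) ⊆ {i | i ≠ j} := by
    rintro i hi rfl
    exact hi (by simp [hfj, enorm_eq_nnnorm])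
  rw [← tsum_subtype_eq_of_support_subset hsupp]
  calc ∑' i : {i // i ≠ j}, ‖f i‖ₑ ≤ ∑' i : {i // i ≠ j}, ENNReal.ofReal (b i) :=
        ENNReal.tsum_le_tsum fun i => by rw [← ofReal_norm]; exact ENNReal.ofReal_le_ofReal (hfb i)
    _ = ENNReal.ofReal (∑' i : {i // i ≠ j}, b i) :=
        (ENNReal.ofReal_tsum_of_nonneg (fun i : {i // i ≠ j} => (norm_nonneg _).trans (hfb i))
          hb).symm
    _ ≤ ENNReal.ofReal S := ENNReal.ofReal_le_ofReal hbS

namespace lp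

local notation "ℓ²(" ι ")" => lp (fun _ : ι => ℂ) 2

section

variable {ι : Type*}

theorem enorm_sq_eq_tsum {E : ι → Type*} [∀ i, NormedAddCommGroup (E i)] (f : lp E 2) :
    ‖f‖ₑ ^ 2 = ∑' i, ‖f i‖ₑ ^ 2 := by
  have h := lp.norm_rpow_eq_tsum (p := 2) (by norm_num) f
  simp only [ENNReal.toReal_ofNat, Real.rpow_two] at h
  simp only [← ofReal_norm, ← ENNReal.ofReal_pow (norm_nonneg _), h]
  exact ENNReal.ofReal_tsum_of_nonneg (fun i => by positivity)
    ((lp.memℓp f).summable (by norm_num) |>.congr fun i => by simp)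

theorem memℓp_mul (w : lp (fun _ : ι => ℂ) ∞) (f : ℓ²(ι)) : Memℓp (fun i => w i * f i) 2 :=
  (lp.memℓp f).norm.const_mul ‖w‖ |>.mono fun i =>
    (norm_mul_le _ _).trans (by gcongr; exact lp.norm_apply_le_norm (by simp) w i)

noncomputable def mulCLM (w : lp (fun _ : ι => ℂ) ∞) : ℓ²(ι) →L[ℂ] ℓ²(ι) :=
  LinearMap.mkContinuous
    { toFun := fun f => ⟨fun i => w i * f i, memℓp_mul w f⟩
      map_add' := fun f g => by ext i; exact mul_add _ _ _
      map_smul' := fun c f => by ext i; simp [mul_left_comm] }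
    ‖w‖ fun f => by
      rw [← norm_smul_of_nonneg (norm_nonneg w)]
      refine lp.norm_mono (by simp) fun i => ?_
      simp only [LinearMap.coe_mk, AddHom.coe_mk, lp.coeFn_smul, Pi.smul_apply, norm_smul,
        norm_norm, norm_mul]
      gcongr
      exact lp.norm_apply_le_norm (by simp) w i

@[simp]
theorem mulCLM_apply (w : lp (fun _ : ι => ℂ) ∞) (f : ℓ²(ι)) (i : ι) :
    mulCLM w f i = w i * f i := rfl

theorem mulCLM_mul_mulCLM_eq_one {w w' : lp (fun _ : ι => ℂ) ∞} (h : ∀ i, w i * w' i = 1) :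
    mulCLM w * mulCLM w' = 1 := by
  ext f i
  simp [← mul_assoc, h]

variable [DecidableEq ι]

@[simp]
theorem inner_single_one_left (i : ι) (f : ℓ²(ι)) : inner ℂ (lp.single 2 i (1 : ℂ)) f = f i := by
  simp [lp.inner_single_left]

theorem mulCLM_single (w : lp (fun _ : ι => ℂ) ∞) (j : ι) (a : ℂ) :
    mulCLM w (lp.single 2 j a) = lp.single 2 j (w j * a) := by
  ext i
  by_cases h : i = j
  · subst h; simp
  · simp [Pi.single_eq_of_ne h]

theorem single_eq_smul_single_one (a : ℂ) (j : ι) :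
    (lp.single 2 j a : ℓ²(ι)) = a • lp.single 2 j 1 := by
  rw [← lp.single_smul, smul_eq_mul, mul_one]

/-- The matrix entry `T(i, j) = ⟪δᵢ, T δⱼ⟫`. -/
noncomputable def entry (T : ℓ²(ι) →L[ℂ] ℓ²(ι)) (i j : ι) : ℂ := T (lp.single 2 j 1) i

theorem hasSum_entry_mul (T : ℓ²(ι) →L[ℂ] ℓ²(ι)) (f : ℓ²(ι)) (i : ι) :
    HasSum (fun j => entry T i j * f j) (T f i) := by
  have h := ((lp.hasSum_single (p := 2) (by norm_num) f).mapL T).mapL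
    (innerSL ℂ (lp.single 2 i (1 : ℂ)))
  simpa [single_eq_smul_single_one (f _), entry, mul_comm] using h

theorem entry_sub (T T' : ℓ²(ι) →L[ℂ] ℓ²(ι)) (i j : ι) :
    entry (T - T') i j = entry T i j - entry T' i j := rfl

theorem norm_entry_le (T : ℓ²(ι) →L[ℂ] ℓ²(ι)) (i j : ι) : ‖entry T i j‖ ≤ ‖T‖ :=
  calc ‖entry T i j‖ ≤ ‖T (lp.single 2 j 1)‖ := lp.norm_apply_le_norm (by norm_num) _ _
    _ ≤ ‖T‖ * ‖(lp.single 2 j 1 : ℓ²(ι))‖ := T.le_opNorm _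
    _ = ‖T‖ := by simp [lp.norm_single]

theorem norm_entry_comm {H : ℓ²(ι) →L[ℂ] ℓ²(ι)} (hH : IsSelfAdjoint H) (i j : ι) :
    ‖entry H i j‖ = ‖entry H j i‖ := by
  have : entry H i j = starRingEnd ℂ (entry H j i) := by
    simp only [entry, ← inner_single_one_left]
    rw [inner_conj_symm, ← ContinuousLinearMap.adjoint_inner_right, hH.adjoint_eq]
  rw [this, Complex.norm_conj]

theorem entry_mulCLM_mul_mul_mulCLM (w w' : lp (fun _ : ι => ℂ) ∞) (T : ℓ²(ι) →L[ℂ] ℓ²(ι))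
    (i j : ι) : entry (mulCLM w * T * mulCLM w') i j = w i * entry T i j * w' j := by
  simp only [entry, mul_apply_eq_comp, mulCLM_single, mul_one,
    single_eq_smul_single_one (w' j), map_smul, coeFn_smul, Pi.smul_apply, mulCLM_apply,
    smul_eq_mul]
  ring

theorem enorm_apply_le (T : ℓ²(ι) →L[ℂ] ℓ²(ι)) (f : ℓ²(ι)) (i : ι) :
    ‖T f i‖ₑ ≤ ∑' j, ‖entry T i j‖ₑ * ‖f j‖ₑ := by
  rw [← (hasSum_entry_mul T f i).tsum_eq]
  exact enorm_tsum_le_tsum_enorm.trans_eq (by simp_rw [enorm_mul])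

theorem opNorm_le_of_schur (T : ℓ²(ι) →L[ℂ] ℓ²(ι)) {C : ℝ} (hC : 0 ≤ C)
    (hrow : ∀ i, ∑' j, ‖entry T i j‖ₑ ≤ ENNReal.ofReal C)
    (hcol : ∀ j, ∑' i, ‖entry T i j‖ₑ ≤ ENNReal.ofReal C) : ‖T‖ ≤ C := by
  refine T.opNorm_le_bound hC fun f => ?_
  set C' := ENNReal.ofReal C
  suffices ‖T f‖ₑ ^ 2 ≤ (C' * ‖f‖ₑ) ^ 2 by
    have := (ENNReal.pow_le_pow_left_iff two_ne_zero).1 this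
    simpa [C', ENNReal.toReal_mul, hC] using ENNReal.toReal_mono (by finiteness) this
  -- Cauchy–Schwarz in each row, with weights `‖T(i, j)‖`
  calc ‖T f‖ₑ ^ 2 = ∑' i, ‖T f i‖ₑ ^ 2 := enorm_sq_eq_tsum _
    _ ≤ ∑' i, (∑' j, ‖entry T i j‖ₑ * ‖f j‖ₑ) ^ 2 := by gcongr; exact enorm_apply_le T f i
    _ ≤ ∑' i, (∑' j, ‖entry T i j‖ₑ) * ∑' j, ‖entry T i j‖ₑ * ‖f j‖ₑ ^ 2 := by
        gcongr; exact ENNReal.tsum_coe_mul_sq_le _ _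
    _ ≤ ∑' i, C' * ∑' j, ‖entry T i j‖ₑ * ‖f j‖ₑ ^ 2 := by gcongr; exact hrow _
    _ = C' * ∑' j, (∑' i, ‖entry T i j‖ₑ) * ‖f j‖ₑ ^ 2 := by
        rw [ENNReal.tsum_mul_left, ENNReal.tsum_comm]; simp_rw [ENNReal.tsum_mul_right]
    _ ≤ C' * ∑' j, C' * ‖f j‖ₑ ^ 2 := by gcongr; exact hcol _
    _ = (C' * ‖f‖ₑ) ^ 2 := by rw [ENNReal.tsum_mul_left, ← enorm_sq_eq_tsum]; ring

end

section

variable {Γ : Type*}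

noncomputable def expWeight (m : Γ → ℝ) {M : ℝ} (hM : ∀ u, m u ≤ M) :
    lp (fun _ : Γ => ℂ) ∞ :=
  ⟨fun u => (Real.exp (m u) : ℂ), memℓp_infty_iff.2
    ⟨Real.exp M, by rintro _ ⟨u, rfl⟩; simpa using Real.exp_le_exp.2 (hM u)⟩⟩

@[simp]
theorem expWeight_apply (m : Γ → ℝ) {M : ℝ} (hM : ∀ u, m u ≤ M) (u : Γ) :
    expWeight m hM u = Real.exp (m u) := rfl

theorem norm_exp_mul_exp_neg_sub_one_le [PseudoMetricSpace Γ] {m : Γ → ℝ}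
    (hm : LipschitzWith 1 m) {α c : ℝ} (hα : 0 ≤ α) (hc₀ : 0 ≤ c) (hc₁ : c ≤ 1) (u v : Γ) :
    ‖(Real.exp (α * c * m u) : ℂ) * Real.exp (-(α * c * m v)) - 1‖ ≤
      c * Real.exp (α * dist u v) := by
  rw [← Complex.ofReal_mul, ← Real.exp_add, ← Complex.ofReal_one, ← Complex.ofReal_sub,
    Complex.norm_real, Real.norm_eq_abs]
  refine Real.abs_exp_sub_one_le_mul_exp hc₀ hc₁ ?_
  have hmuv : |m u - m v| ≤ dist u v := by simpa [Real.dist_eq] using hm.dist_le_mul u v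
  calc |α * c * m u + -(α * c * m v)| = α * c * |m u - m v| := by
        rw [← sub_eq_add_neg, ← mul_sub, abs_mul, abs_of_nonneg (by positivity)]
    _ ≤ α * c * dist u v := by gcongr
    _ = c * (α * dist u v) := by ring

variable [DecidableEq Γ] [PseudoMetricSpace Γ]

theorem norm_mulCLM_mul_mul_mulCLM_sub_le {H : ℓ²(Γ) →L[ℂ] ℓ²(Γ)} (hH : IsSelfAdjoint H)
    {α S c : ℝ} (hS₀ : 0 ≤ S) (hc : 0 ≤ c)
    (hsum : ∀ j, Summable fun i : {i // i ≠ j} => ‖entry H i j‖ * Real.exp (α * dist j i))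
    (hS : ∀ j, ∑' i : {i // i ≠ j}, ‖entry H i j‖ * Real.exp (α * dist j i) ≤ S)
    {w w' : lp (fun _ : Γ => ℂ) ∞} (hdiag : ∀ i, w i * w' i = 1)
    (hw : ∀ i j, ‖w i * w' j - 1‖ ≤ c * Real.exp (α * dist i j)) :
    ‖mulCLM w * H * mulCLM w' - H‖ ≤ c * S := by
  set K := mulCLM w * H * mulCLM w' - H
  have hK (i j : Γ) : entry K i j = (w i * w' j - 1) * entry H i j := by
    rw [entry_sub, entry_mulCLM_mul_mul_mulCLM]
    ring
  have hKdiag (j : Γ) : entry K j j = 0 := by simp [hK, hdiag]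
  have hKle (i j : Γ) : ‖entry K i j‖ ≤ c * (‖entry H i j‖ * Real.exp (α * dist i j)) := by
    calc ‖entry K i j‖ = ‖w i * w' j - 1‖ * ‖entry H i j‖ := by rw [hK, norm_mul]
      _ ≤ c * Real.exp (α * dist i j) * ‖entry H i j‖ := by gcongr; exact hw i j
      _ = c * (‖entry H i j‖ * Real.exp (α * dist i j)) := by ring
  have hcS : ∀ j, ∑' i : {i // i ≠ j}, c * (‖entry H i j‖ * Real.exp (α * dist j i)) ≤ c * S :=
    fun j => by rw [tsum_mul_left]; gcongr; exact hS j
  refine opNorm_le_of_schur K (C := c * S) (by positivity) (fun i => ?_) (fun j => ?_)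
  · refine tsum_enorm_le_ofReal_of_eq_zero (b := fun j => c * (‖entry H j i‖ *
      Real.exp (α * dist i j))) (hKdiag i) (fun j => ?_) ((hsum i).mul_left c) (hcS i)
    rw [norm_entry_comm hH j i]
    exact hKle i j
  · refine tsum_enorm_le_ofReal_of_eq_zero (b := fun i => c * (‖entry H i j‖ *
      Real.exp (α * dist j i))) (hKdiag j) (fun i => ?_) ((hsum j).mul_left c) (hcS j)
    rw [dist_comm j i]
    exact hKle i j

theorem exp_mul_norm_entry_le {H R : ℓ²(Γ) →L[ℂ] ℓ²(Γ)} (hH : IsSelfAdjoint H)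
    {α S Δ : ℝ} (hα : 0 ≤ α) (hS₀ : 0 ≤ S) (hΔ : 0 < Δ)
    (hsum : ∀ j, Summable fun i : {i // i ≠ j} => ‖entry H i j‖ * Real.exp (α * dist j i))
    (hS : ∀ j, ∑' i : {i // i ≠ j}, ‖entry H i j‖ * Real.exp (α * dist j i) ≤ S)
    {z : ℂ} (hR₁ : R * (H - z • 1) = 1) (hR₂ : (H - z • 1) * R = 1) (hR : ‖R‖ ≤ Δ⁻¹)
    {m : Γ → ℝ} (hm : LipschitzWith 1 m) {M : ℝ} (hmM : ∀ u, |m u| ≤ M) (x y : Γ) :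
    Real.exp (α * (Δ / (Δ + 2 * S)) * (m x - m y)) * ‖entry R x y‖ ≤ 2 / Δ := by
  set c := Δ / (Δ + 2 * S) with hc
  have hc₀ : 0 ≤ c := by positivity
  have hc₁ : c ≤ 1 := div_le_one_of_le₀ (by linarith) (by positivity)
  set w := expWeight (fun u => α * c * m u) fun u =>
    mul_le_mul_of_nonneg_left ((le_abs_self _).trans (hmM u)) (by positivity)
  set w' := expWeight (fun u => -(α * c * m u)) fun u => by
    rw [← mul_neg]; exact mul_le_mul_of_nonneg_left ((neg_le_abs _).trans (hmM u)) (by positivity)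
  have hww' (u : Γ) : w u * w' u = 1 := by
    simp only [w, w', expWeight_apply, ← Complex.ofReal_mul, ← Real.exp_add, add_neg_cancel,
      Real.exp_zero, Complex.ofReal_one]
  have hK : ‖mulCLM w * (H - z • 1) * mulCLM w' - (H - z • 1)‖ ≤ c * S := by
    have hWW' : mulCLM w * mulCLM w' = 1 := mulCLM_mul_mulCLM_eq_one hww'
    rw [mul_sub, sub_mul, mul_smul_comm, mul_one, smul_mul_assoc, hWW', sub_sub_sub_cancel_right]
    exact norm_mulCLM_mul_mul_mulCLM_sub_le hH hS₀ hc₀ hsum hS hww'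
      (norm_exp_mul_exp_neg_sub_one_le hm hα hc₀ hc₁)
  have hA : ‖mulCLM w * R * mulCLM w'‖ ≤ 2 / Δ := by
    refine (norm_mul_mul_le_two_mul hR₁ hR₂ (mulCLM_mul_mulCLM_eq_one hww')
      (mulCLM_mul_mulCLM_eq_one fun u => by rw [mul_comm, hww']) ?_).trans ?_
    · calc ‖R‖ * _ ≤ Δ⁻¹ * (c * S) := by gcongr
        _ ≤ 1 / 2 := by rw [hc]; field_simp; linarith
    · rw [div_eq_mul_inv]; gcongr
  have hentry : ‖entry (mulCLM w * R * mulCLM w') x y‖ =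
      Real.exp (α * c * (m x - m y)) * ‖entry R x y‖ := by
    simp only [entry_mulCLM_mul_mul_mulCLM, w, w', expWeight_apply, norm_mul, Complex.norm_real,
      Real.norm_of_nonneg (Real.exp_pos _).le]
    rw [mul_sub, Real.exp_sub, Real.exp_neg]
    ring
  exact hentry ▸ (norm_entry_le _ x y).trans hA

end

end lp

theorem aizenman_resolvent_decay_general
    {Γ : Type*} [DecidableEq Γ] [MetricSpace Γ]
    (H : lp (fun _ : Γ => ℂ) 2 →L[ℂ] lp (fun _ : Γ => ℂ) 2)
    (hH : IsSelfAdjoint H)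
    (α S : ℝ) (hα : 0 < α)
    (hsum : ∀ x : Γ, Summable (fun y : {y : Γ // y ≠ x} =>
      ‖(inner ℂ (lp.single 2 (y : Γ) (1 : ℂ)) (H (lp.single 2 x (1 : ℂ))) : ℂ)‖ *
        Real.exp (α * dist x (y : Γ))))
    (hS : ∀ x : Γ, (∑' y : {y : Γ // y ≠ x},
      ‖(inner ℂ (lp.single 2 (y : Γ) (1 : ℂ)) (H (lp.single 2 x (1 : ℂ))) : ℂ)‖ *
        Real.exp (α * dist x (y : Γ))) ≤ S)
    (z : ℂ)
    (hΔ : 0 < Metric.infDist z (spectrum ℂ H))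
    (R : lp (fun _ : Γ => ℂ) 2 →L[ℂ] lp (fun _ : Γ => ℂ) 2)
    (hR₁ : R * (H - z • 1) = 1) (hR₂ : (H - z • 1) * R = 1)
    (x y : Γ) :
    ‖(inner ℂ (lp.single 2 x (1 : ℂ)) (R (lp.single 2 y (1 : ℂ))) : ℂ)‖ ≤
      2 / Metric.infDist z (spectrum ℂ H) *
        Real.exp (-(α * Metric.infDist z (spectrum ℂ H) /
          (Metric.infDist z (spectrum ℂ H) + 2 * S)) * dist x y) := by
  set Δ := Metric.infDist z (spectrum ℂ H)
  have hS₀ : 0 ≤ S := (tsum_nonneg fun _ => by positivity).trans (hS x)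
  have hR : ‖R‖ ≤ Δ⁻¹ :=
    have := hH.isStarNormal
    IsStarNormal.norm_le_inv_infDist hR₁ hR₂ hΔ
  -- the weight is the distance to `y`, truncated at `dist x y` so that it stays bounded
  have key := lp.exp_mul_norm_entry_le hH hα.le hS₀ hΔ (by simpa [lp.entry] using hsum)
    (by simpa [lp.entry] using hS) hR₁ hR₂ hR ((LipschitzWith.dist_left y).min_const (dist x y))
    (fun u => (abs_of_nonneg (le_min dist_nonneg dist_nonneg)).trans_le (min_le_right _ _)) x y
  simp only [min_self, dist_self, min_eq_left dist_nonneg, sub_zero] at key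
  rw [lp.inner_single_one_left, mul_div_assoc, neg_mul, Real.exp_neg, ← div_eq_mul_inv,
    le_div_iff₀ (Real.exp_pos _)]
  exact (mul_comm _ _).trans_le key

/-- **Combes–Thomas / Aizenman estimate.** Let `Γ` be a countable metric space and `H` a
bounded self-adjoint operator on `ℓ²(Γ)` whose off-diagonal matrix entries satisfy
`∑_{y ≠ x} |H(x,y)| e^{α dist(x,y)} ≤ S < ∞` for some `α > 0`.  Then for `z` outside the
spectrum of `H`, with `Δ = dist(z, σ(H)) > 0`, the entries of the resolvent `R = (H - z)⁻¹`
satisfy `|R(x,y)| ≤ (2/Δ) exp(-(αΔ/(Δ + 2S)) · dist(x,y))`. -/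
theorem aizenman_resolvent_decay
    {Γ : Type*} [Countable Γ] [DecidableEq Γ] [MetricSpace Γ]
    (H : lp (fun _ : Γ => ℂ) 2 →L[ℂ] lp (fun _ : Γ => ℂ) 2)
    (hH : IsSelfAdjoint H)
    (α S : ℝ) (hα : 0 < α)
    (hsum : ∀ x : Γ, Summable (fun y : {y : Γ // y ≠ x} =>
      ‖(inner ℂ (lp.single 2 (y : Γ) (1 : ℂ)) (H (lp.single 2 x (1 : ℂ))) : ℂ)‖ *
        Real.exp (α * dist x (y : Γ))))
    (hS : ∀ x : Γ, (∑' y : {y : Γ // y ≠ x},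
      ‖(inner ℂ (lp.single 2 (y : Γ) (1 : ℂ)) (H (lp.single 2 x (1 : ℂ))) : ℂ)‖ *
        Real.exp (α * dist x (y : Γ))) ≤ S)
    (z : ℂ) (hz : z ∉ spectrum ℂ H)
    (hΔ : 0 < Metric.infDist z (spectrum ℂ H))
    (R : lp (fun _ : Γ => ℂ) 2 →L[ℂ] lp (fun _ : Γ => ℂ) 2)
    (hR₁ : R * (H - z • 1) = 1) (hR₂ : (H - z • 1) * R = 1)
    (x y : Γ) :
    ‖(inner ℂ (lp.single 2 x (1 : ℂ)) (R (lp.single 2 y (1 : ℂ))) : ℂ)‖ ≤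
      2 / Metric.infDist z (spectrum ℂ H) *
        Real.exp (-(α * Metric.infDist z (spectrum ℂ H) /
          (Metric.infDist z (spectrum ℂ H) + 2 * S)) * dist x y) :=
  aizenman_resolvent_decay_general H hH α S hα hsum hS z hΔ R hR₁ hR₂ x y
end

section
/- Let M be an m×m real symmetric tridiagonal matrix whose off-diagonal entries have absolute value at most B. Then for any z ∈ ℂ with η = Im z > 0 and any indices i, j, the resolvent entry satisfies |(M−z)⁻¹_{ij}| ≤ (2/η)·exp(−(η/(η+4Be))·|i−j|). -/
open Finset

lemma aux_neighbor_count (m : ℕ) (k : Fin m) :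
    ∑ l : Fin m, (if |(k : ℤ) - (l : ℤ)| = 1 then (1 : ℝ) else 0) ≤ 2 := by
  rw [Finset.sum_boole]
  have hcard : (Finset.univ.filter fun l : Fin m => |(k : ℤ) - (l : ℤ)| = 1).card ≤ 2 := by
    have : (Finset.univ.filter fun l : Fin m => |(k : ℤ) - (l : ℤ)| = 1).card ≤
        ({(k : ℤ) - 1, (k : ℤ) + 1} : Finset ℤ).card := by
      refine Finset.card_le_card_of_injOn (fun l : Fin m => ((l : ℤ))) ?_ ?_
      · intro l hl
        simp only [Finset.coe_filter, Finset.mem_univ, true_and, Set.mem_setOf_eq] at hl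
        rcases abs_eq (by norm_num : (0:ℤ) ≤ 1) |>.1 hl with h | h
        · simp only [Finset.coe_insert, Finset.coe_singleton, Set.mem_insert_iff, Set.mem_singleton_iff]; left; omega
        · simp only [Finset.coe_insert, Finset.coe_singleton, Set.mem_insert_iff, Set.mem_singleton_iff]; right; omega
      · intro a _ b _ hab
        simp only [] at hab
        exact Fin.ext (by exact_mod_cast hab)
    calc _ ≤ _ := this
      _ ≤ 2 := Finset.card_insert_le _ _ |>.trans (by simp)
  exact_mod_cast hcard

lemma aux_band (m : ℕ) (a : Fin m → ℝ) (ha : ∀ k, 0 ≤ a k) :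
    ∑ k : Fin m, ∑ l : Fin m, (if |(k : ℤ) - (l : ℤ)| = 1 then a k * a l else 0) ≤
      2 * ∑ k : Fin m, (a k) ^ 2 := by
  have step1 : ∑ k : Fin m, ∑ l : Fin m, (if |(k : ℤ) - (l : ℤ)| = 1 then a k * a l else 0) ≤
      ∑ k : Fin m, ∑ l : Fin m,
        ((if |(k : ℤ) - (l : ℤ)| = 1 then (a k)^2 else 0)/2
          + (if |(k : ℤ) - (l : ℤ)| = 1 then (a l)^2 else 0)/2) := by
    apply Finset.sum_le_sum; intro k _
    apply Finset.sum_le_sum; intro l _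
    split_ifs with h
    · nlinarith [sq_nonneg (a k - a l)]
    · simp
  have step2 : ∑ k : Fin m, ∑ l : Fin m,
      (if |(k : ℤ) - (l : ℤ)| = 1 then (a l)^2 else 0) =
      ∑ k : Fin m, ∑ l : Fin m, (if |(k : ℤ) - (l : ℤ)| = 1 then (a k)^2 else 0) := by
    rw [Finset.sum_comm]
    apply Finset.sum_congr rfl; intro k _
    apply Finset.sum_congr rfl; intro l _
    rw [abs_sub_comm]
  have step3 : ∑ k : Fin m, ∑ l : Fin m,
      (if |(k : ℤ) - (l : ℤ)| = 1 then (a k)^2 else 0) ≤ 2 * ∑ k : Fin m, (a k)^2 := by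
    rw [Finset.mul_sum]
    apply Finset.sum_le_sum; intro k _
    have : ∑ l : Fin m, (if |(k : ℤ) - (l : ℤ)| = 1 then (a k)^2 else 0)
        = (a k)^2 * ∑ l : Fin m, (if |(k : ℤ) - (l : ℤ)| = 1 then (1:ℝ) else 0) := by
      rw [Finset.mul_sum]
      apply Finset.sum_congr rfl; intro l _
      split_ifs <;> simp
    rw [this]
    calc (a k)^2 * ∑ l : Fin m, (if |(k : ℤ) - (l : ℤ)| = 1 then (1:ℝ) else 0)
        ≤ (a k)^2 * 2 := by
          apply mul_le_mul_of_nonneg_left (aux_neighbor_count m k) (sq_nonneg _)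
      _ = 2 * (a k)^2 := by ring
  calc _ ≤ _ := step1
    _ = ∑ k : Fin m, ∑ l : Fin m, (if |(k : ℤ) - (l : ℤ)| = 1 then (a k)^2 else 0) := by
        simp only [Finset.sum_add_distrib, ← Finset.sum_div, step2]; ring
    _ ≤ _ := step3

open Finset

lemma aux_exp_sub_one_abs (x : ℝ) : |Real.exp x - 1| ≤ Real.exp |x| - 1 := by
  rcases le_or_gt 0 x with h | h
  · rw [abs_of_nonneg h, abs_of_nonneg (by simpa using Real.one_le_exp h)]
  · rw [abs_of_neg h, abs_of_nonpos (by simpa using Real.exp_le_one_iff.2 h.le)]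
    have h1 : Real.exp (-x) + Real.exp x ≥ 2 := by
      have := Real.add_one_le_exp (-x)
      have := Real.add_one_le_exp x
      nlinarith [Real.exp_pos x, Real.exp_pos (-x)]
    linarith

lemma aux_exp_sub_one_le (x : ℝ) (hx : 0 ≤ x) : Real.exp x - 1 ≤ x * Real.exp x := by
  have h := Real.add_one_le_exp (-x)
  have h2 : Real.exp (-x) * Real.exp x = 1 := by
    rw [← Real.exp_add]; simp
  nlinarith [Real.exp_pos x]

open Finset

lemma aux_quad (m : ℕ) (M : Matrix (Fin m) (Fin m) ℝ) (B : ℝ) (hB : 0 ≤ B)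
    (hsym : M.IsSymm)
    (htri : ∀ i j : Fin m, 2 ≤ |(i : ℤ) - (j : ℤ)| → M i j = 0)
    (hoff : ∀ i j : Fin m, |(i : ℤ) - (j : ℤ)| = 1 → |M i j| ≤ B)
    (z : ℂ) (hz : 0 < z.im) (μ : ℝ)
    (hμ : B * (Real.exp |μ| - 1) ≤ z.im / 4)
    (v : Fin m → ℂ) :
    z.im / 2 * ∑ k : Fin m, ‖v k‖ ^ 2 ≤
      ‖∑ k : Fin m, (starRingEnd ℂ) (v k) *
        ∑ l : Fin m, Complex.exp ((μ * ((k : ℤ) - (l : ℤ)) : ℝ) : ℂ) *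
          ((M.map (fun a => (a : ℂ)) - z • (1 : Matrix (Fin m) (Fin m) ℂ)) k l) * v l‖ := by
  set Sig : ℝ := ∑ k : Fin m, ‖v k‖ ^ 2 with hSig
  have hSig0 : 0 ≤ Sig := Finset.sum_nonneg fun k _ => sq_nonneg _
  set SM : ℂ := ∑ k : Fin m, ∑ l : Fin m, (starRingEnd ℂ) (v k) * (M k l : ℂ) * v l with hSMdef
  set T : ℂ := ∑ k : Fin m, ∑ l : Fin m,
    (starRingEnd ℂ) (v k) * ((Complex.exp ((μ * ((k : ℤ) - (l : ℤ)) : ℝ) : ℂ) - 1) * (M k l : ℂ)) * v l with hTdef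
  set S : ℂ := ∑ k : Fin m, (starRingEnd ℂ) (v k) *
        ∑ l : Fin m, Complex.exp ((μ * ((k : ℤ) - (l : ℤ)) : ℝ) : ℂ) *
          ((M.map (fun a => (a : ℂ)) - z • (1 : Matrix (Fin m) (Fin m) ℂ)) k l) * v l with hSdef
  -- decomposition
  have hdecomp : S = SM + T - z * (Sig : ℂ) := by
    have h1 : S = ∑ k : Fin m, ∑ l : Fin m,
        ((starRingEnd ℂ) (v k) * (M k l : ℂ) * v l
          + (starRingEnd ℂ) (v k) * ((Complex.exp ((μ * ((k : ℤ) - (l : ℤ)) : ℝ) : ℂ) - 1) * (M k l : ℂ)) * v l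
          - (if k = l then z * ((starRingEnd ℂ) (v k) * v k) else 0)) := by
      rw [hSdef]
      apply Finset.sum_congr rfl; intro k _
      rw [Finset.mul_sum]
      apply Finset.sum_congr rfl; intro l _
      simp only [Matrix.sub_apply, Matrix.map_apply, Matrix.smul_apply, Matrix.one_apply,
        smul_eq_mul]
      rcases eq_or_ne k l with h | h
      · subst h
        simp only [if_pos rfl, sub_self, mul_zero, Complex.ofReal_zero, Complex.exp_zero,
          eq_self_iff_true, if_true]
        ring
      · simp only [if_neg h]
        ring
    rw [h1]
    simp only [Finset.sum_sub_distrib, Finset.sum_add_distrib]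
    rw [← hSMdef, ← hTdef]
    congr 1
    have h2 : ∀ k : Fin m, ∑ l : Fin m, (if k = l then z * ((starRingEnd ℂ) (v k) * v k) else 0)
        = z * ((starRingEnd ℂ) (v k) * v k) := by
      intro k
      rw [Finset.sum_ite_eq]
      simp
    rw [Finset.sum_congr rfl fun k _ => h2 k, ← Finset.mul_sum]
    congr 1
    have h3 : ∀ k : Fin m, (starRingEnd ℂ) (v k) * v k = ((‖v k‖ ^ 2 : ℝ) : ℂ) := by
      intro k
      rw [Complex.sq_norm]
      rw [← Complex.mul_conj (v k)]
      ring
    rw [Finset.sum_congr rfl fun k _ => h3 k, hSig]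
    push_cast
    ring
  -- SM has zero imaginary part
  have hSM : SM.im = 0 := by
    rw [← Complex.conj_eq_iff_im]
    rw [hSMdef]
    rw [map_sum]
    rw [Finset.sum_comm]
    apply Finset.sum_congr rfl; intro k _
    rw [map_sum]
    apply Finset.sum_congr rfl; intro l _
    simp only [map_mul, Complex.conj_conj, Complex.conj_ofReal]
    rw [hsym.apply k l]
    ring
  -- bound on T
  have hT : ‖T‖ ≤ z.im / 2 * Sig := by
    have habs : ‖T‖ ≤ ∑ k : Fin m, ∑ l : Fin m,
        (if |(k : ℤ) - (l : ℤ)| = 1 then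
          (B * (Real.exp |μ| - 1)) * (‖v k‖ * ‖v l‖) else 0) := by
      rw [hTdef]
      refine (norm_sum_le _ _).trans ?_
      apply Finset.sum_le_sum; intro k _
      refine (norm_sum_le _ _).trans ?_
      apply Finset.sum_le_sum; intro l _
      rcases eq_or_ne ((|(k : ℤ) - (l : ℤ)|)) 1 with h | h
      · rw [if_pos h]
        simp only [norm_mul, Complex.norm_conj]
        have he : ‖Complex.exp ((μ * ((k : ℤ) - (l : ℤ)) : ℝ) : ℂ) - 1‖
            ≤ Real.exp |μ| - 1 := by
          have : (Complex.exp ((μ * ((k : ℤ) - (l : ℤ)) : ℝ) : ℂ) - 1)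
              = ((Real.exp (μ * ((k : ℤ) - (l : ℤ))) - 1 : ℝ) : ℂ) := by
            rw [← Complex.ofReal_exp]; push_cast; ring
          rw [this, Complex.norm_real, Real.norm_eq_abs]
          refine (aux_exp_sub_one_abs _).trans ?_
          have : |μ * (((k : ℤ) : ℝ) - ((l : ℤ) : ℝ))| = |μ| := by
            rw [abs_mul]
            have : |(((k : ℤ) : ℝ) - ((l : ℤ) : ℝ))| = 1 := by
              rw [show (((k : ℤ) : ℝ) - ((l : ℤ) : ℝ)) = (((k : ℤ) - (l : ℤ) : ℤ) : ℝ) by push_cast; ring]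
              rw [← Int.cast_abs, h]; norm_num
            rw [this, mul_one]
          rw [this]
        have hM : ‖(M k l : ℂ)‖ ≤ B := by
          rw [Complex.norm_real, Real.norm_eq_abs]; exact hoff k l h
        have h1 : (0:ℝ) ≤ Real.exp |μ| - 1 := by
          simpa using Real.one_le_exp (abs_nonneg μ)
        calc ‖v k‖ * (‖Complex.exp ((μ * ((k : ℤ) - (l : ℤ)) : ℝ) : ℂ) - 1‖ * ‖(M k l : ℂ)‖) * ‖v l‖
            ≤ ‖v k‖ * ((Real.exp |μ| - 1) * B) * ‖v l‖ := by
              gcongr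
          _ = B * (Real.exp |μ| - 1) * (‖v k‖ * ‖v l‖) := by ring
      · rw [if_neg h]
        rcases eq_or_ne k l with hkl | hkl
        · subst hkl
          simp
        · have h2 : 2 ≤ |(k : ℤ) - (l : ℤ)| := by
            have hne : (k : ℤ) ≠ (l : ℤ) := by
              intro hc; exact hkl (Fin.ext (by exact_mod_cast hc))
            have h1 : 1 ≤ |(k : ℤ) - (l : ℤ)| := Int.one_le_abs (sub_ne_zero.mpr hne)
            omega
          rw [htri k l h2]
          simp
    refine habs.trans ?_
    have hc : 0 ≤ B * (Real.exp |μ| - 1) :=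
      mul_nonneg hB (by simpa using Real.one_le_exp (abs_nonneg μ))
    have h4 : ∑ k : Fin m, ∑ l : Fin m,
        (if |(k : ℤ) - (l : ℤ)| = 1 then
          (B * (Real.exp |μ| - 1)) * (‖v k‖ * ‖v l‖) else 0)
        = (B * (Real.exp |μ| - 1)) * ∑ k : Fin m, ∑ l : Fin m,
          (if |(k : ℤ) - (l : ℤ)| = 1 then (‖v k‖ * ‖v l‖) else 0) := by
      rw [Finset.mul_sum]
      apply Finset.sum_congr rfl; intro k _
      rw [Finset.mul_sum]
      apply Finset.sum_congr rfl; intro l _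
      split_ifs <;> simp
    rw [h4]
    have h5 := aux_band m (fun k => ‖v k‖) (fun k => norm_nonneg _)
    calc (B * (Real.exp |μ| - 1)) * ∑ k : Fin m, ∑ l : Fin m,
          (if |(k : ℤ) - (l : ℤ)| = 1 then (‖v k‖ * ‖v l‖) else 0)
        ≤ (B * (Real.exp |μ| - 1)) * (2 * Sig) := by
          apply mul_le_mul_of_nonneg_left _ hc
          exact h5
      _ ≤ z.im / 4 * (2 * Sig) := by
          apply mul_le_mul_of_nonneg_right hμ
          linarith
      _ = z.im / 2 * Sig := by ring
  -- conclude
  have him : S.im = T.im - z.im * Sig := by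
    rw [hdecomp]
    simp [hSM, Complex.mul_im]
  have h6 : |S.im| ≥ z.im * Sig - |T.im| := by
    rw [him]
    have := abs_sub_abs_le_abs_sub (z.im * Sig) T.im
    have h7 : |z.im * Sig| = z.im * Sig := abs_of_nonneg (mul_nonneg hz.le hSig0)
    rw [abs_sub_comm] at this
    linarith
  have h8 : |T.im| ≤ z.im / 2 * Sig := (Complex.abs_im_le_norm T).trans hT
  have h9 := Complex.abs_im_le_norm S
  linarith
/-- **Exponential off-diagonal decay of the resolvent of a tridiagonal matrix.**
If `M` is an `m × m` real symmetric tridiagonal matrix whose off-diagonal entries are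
bounded in absolute value by `B`, then for `z = E + iη` with `η = Im z > 0` the entries
of the resolvent satisfy
`|(M - z)⁻¹_{ij}| ≤ (2/η) · exp(-(η/(η + 4 B e)) · |i - j|)`. -/
theorem tridiagonal_resolvent_decay (m : ℕ) (M : Matrix (Fin m) (Fin m) ℝ)
    (B : ℝ) (hB : 0 ≤ B)
    (hsym : M.IsSymm)
    (htri : ∀ i j : Fin m, 2 ≤ |(i : ℤ) - (j : ℤ)| → M i j = 0)
    (hoff : ∀ i j : Fin m, |(i : ℤ) - (j : ℤ)| = 1 → |M i j| ≤ B)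
    (z : ℂ) (hz : 0 < z.im) (i j : Fin m) :
    ‖((M.map (fun a => (a : ℂ)) - z • (1 : Matrix (Fin m) (Fin m) ℂ))⁻¹) i j‖ ≤
      2 / z.im * Real.exp (-(z.im / (z.im + 4 * B * Real.exp 1)) * |(i : ℤ) - (j : ℤ)|) := by
  set A : Matrix (Fin m) (Fin m) ℂ := M.map (fun a => (a : ℂ)) - z • 1 with hA
  by_cases hdet : IsUnit A.det
  case neg =>
    rw [Matrix.nonsing_inv_apply_not_isUnit A hdet]
    simp only [Matrix.zero_apply, norm_zero]
    positivity
  case pos =>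
  have hAinv : A * A⁻¹ = 1 := Matrix.mul_nonsing_inv A hdet
  set μ0 : ℝ := z.im / (z.im + 4 * B * Real.exp 1) with hμ0
  have hden : 0 < z.im + 4 * B * Real.exp 1 := by
    have := Real.exp_pos 1
    nlinarith
  have hμ0pos : 0 < μ0 := div_pos hz hden
  have hμ0le1 : μ0 ≤ 1 := by
    rw [hμ0, div_le_one hden]
    nlinarith [Real.exp_pos 1]
  have hpert : B * (Real.exp μ0 - 1) ≤ z.im / 4 := by
    have h1 : Real.exp μ0 - 1 ≤ μ0 * Real.exp μ0 := aux_exp_sub_one_le μ0 hμ0pos.le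
    have h2 : Real.exp μ0 ≤ Real.exp 1 := Real.exp_le_exp.2 hμ0le1
    have h3 : B * Real.exp 1 * μ0 ≤ z.im / 4 := by
      rw [hμ0, ← mul_div_assoc, div_le_div_iff₀ hden (by norm_num : (0:ℝ) < 4)]
      nlinarith [Real.exp_pos 1]
    have h4 : 0 < Real.exp μ0 := Real.exp_pos _
    have h5 : B * (Real.exp μ0 - 1) ≤ B * (μ0 * Real.exp μ0) :=
      mul_le_mul_of_nonneg_left h1 hB
    have h6 : B * (μ0 * Real.exp μ0) ≤ B * (μ0 * Real.exp 1) := by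
      apply mul_le_mul_of_nonneg_left _ hB
      exact mul_le_mul_of_nonneg_left h2 hμ0pos.le
    have h7 : B * (μ0 * Real.exp 1) = B * Real.exp 1 * μ0 := by ring
    linarith
  set μ : ℝ := if (j : ℤ) ≤ (i : ℤ) then μ0 else -μ0 with hμdef
  have hμabs : |μ| = μ0 := by
    rw [hμdef]; split_ifs
    · exact abs_of_pos hμ0pos
    · rw [abs_neg]; exact abs_of_pos hμ0pos
  set w : Fin m → ℂ := fun k => Complex.exp ((μ * ((k : ℤ) - (j : ℤ)) : ℝ) : ℂ) * A⁻¹ k j with hw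
  have key1 : ∀ k : Fin m,
      ∑ l : Fin m, Complex.exp ((μ * ((k : ℤ) - (l : ℤ)) : ℝ) : ℂ) * A k l * w l
        = if k = j then 1 else 0 := by
    intro k
    have hterm : ∀ l : Fin m, Complex.exp ((μ * ((k : ℤ) - (l : ℤ)) : ℝ) : ℂ) * A k l * w l
        = Complex.exp ((μ * ((k : ℤ) - (j : ℤ)) : ℝ) : ℂ) * (A k l * A⁻¹ l j) := by
      intro l
      rw [hw]
      simp only []
      rw [show (((μ * ((k : ℤ) - (j : ℤ)) : ℝ)) : ℂ)
          = (((μ * ((k : ℤ) - (l : ℤ)) : ℝ)) : ℂ) + (((μ * ((l : ℤ) - (j : ℤ)) : ℝ)) : ℂ) by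
        push_cast; ring]
      rw [Complex.exp_add]
      ring
    rw [Finset.sum_congr rfl fun l _ => hterm l, ← Finset.mul_sum]
    have hmm : ∑ l : Fin m, A k l * A⁻¹ l j = (1 : Matrix (Fin m) (Fin m) ℂ) k j := by
      rw [← hAinv, Matrix.mul_apply]
    rw [hmm, Matrix.one_apply]
    rcases eq_or_ne k j with h | h
    · subst h
      simp
    · simp [h]
  have hquad := aux_quad m M B hB hsym htri hoff z hz μ (by rw [hμabs]; exact hpert) w
  rw [← hA] at hquad
  have hsum : (∑ k : Fin m, (starRingEnd ℂ) (w k) *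
      ∑ l : Fin m, Complex.exp ((μ * ((k : ℤ) - (l : ℤ)) : ℝ) : ℂ) * A k l * w l)
      = (starRingEnd ℂ) (w j) := by
    rw [Finset.sum_congr rfl fun k _ => by rw [key1 k]]
    simp only [mul_ite, mul_one, mul_zero]
    rw [Finset.sum_ite_eq']
    simp
  rw [hsum] at hquad
  set Sig : ℝ := ∑ k : Fin m, ‖w k‖ ^ 2 with hSig
  have hSig0 : 0 ≤ Sig := Finset.sum_nonneg fun k _ => sq_nonneg _
  rw [Complex.norm_conj] at hquad
  -- now hquad : z.im / 2 * Sig ≤ ‖w j‖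
  have hle : ∀ k : Fin m, ‖w k‖ ≤ Real.sqrt Sig := by
    intro k
    have h1 : ‖w k‖ ^ 2 ≤ Sig :=
      Finset.single_le_sum (fun l _ => sq_nonneg (‖w l‖)) (Finset.mem_univ k)
    have := Real.sqrt_le_sqrt h1
    rwa [Real.sqrt_sq (norm_nonneg _)] at this
  have hwi : ‖w i‖ ≤ 2 / z.im := by
    have h2 : z.im / 2 * Sig ≤ Real.sqrt Sig := hquad.trans (hle j)
    have hs0 : 0 ≤ Real.sqrt Sig := Real.sqrt_nonneg _
    have hss : Real.sqrt Sig * Real.sqrt Sig = Sig := Real.mul_self_sqrt hSig0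
    have h3 : Real.sqrt Sig ≤ 2 / z.im := by
      rcases eq_or_lt_of_le hs0 with h | h
      · rw [← h]; positivity
      · rw [le_div_iff₀ hz]
        nlinarith
    exact (hle i).trans h3
  -- translate to the resolvent entry
  have hexp : ‖w i‖ = Real.exp (μ * ((i : ℤ) - (j : ℤ))) * ‖A⁻¹ i j‖ := by
    rw [hw]
    simp only [norm_mul, Complex.norm_exp, Complex.ofReal_re]
  have hμd : μ * (((i : ℤ) : ℝ) - ((j : ℤ) : ℝ)) = μ0 * |((i : ℤ) : ℝ) - ((j : ℤ) : ℝ)| := by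
    rcases le_or_gt ((j : ℤ)) ((i : ℤ)) with h | h
    · have hr : ((j : ℤ) : ℝ) ≤ ((i : ℤ) : ℝ) := by exact_mod_cast h
      rw [hμdef, if_pos h, abs_of_nonneg (by linarith)]
    · have hr : ((i : ℤ) : ℝ) < ((j : ℤ) : ℝ) := by exact_mod_cast h
      rw [hμdef, if_neg (not_le.2 h), abs_of_neg (by linarith)]
      ring
  have final : ‖A⁻¹ i j‖ ≤
      2 / z.im * Real.exp (-(μ0 * |((i : ℤ) : ℝ) - ((j : ℤ) : ℝ)|)) := by
    have h5 : Real.exp (μ0 * |((i : ℤ) : ℝ) - ((j : ℤ) : ℝ)|) * ‖A⁻¹ i j‖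
        ≤ 2 / z.im := by
      rw [← hμd, ← hexp]; exact hwi
    have h6 := mul_le_mul_of_nonneg_right h5
      (Real.exp_nonneg (-(μ0 * |((i : ℤ) : ℝ) - ((j : ℤ) : ℝ)|)))
    rw [mul_comm (Real.exp _) ‖_‖, mul_assoc, ← Real.exp_add] at h6
    simpa using h6
  calc ‖A⁻¹ i j‖ ≤ _ := final
    _ = 2 / z.im * Real.exp (-(z.im / (z.im + 4 * B * Real.exp 1)) * |(i : ℤ) - (j : ℤ)|) := by
      rw [hμ0]
      congr 1
      congr 1
      push_cast
      ring
end

section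
/- Let B be an m×m lower bidiagonal matrix with B_{11} = a₁₁, B_{21} = a₂₁, and write M = BBᵀ. Then for z with Im z > 0, the (1,1) resolvent entry satisfies R₁₁ = (M−z)⁻¹_{11} = 1/(a₁₁² − z − a₁₁²·a₂₁²·R̂₁₁/(1 + a₂₁²·R̂₁₁)), where R̂₁₁ = (M̂ − z)⁻¹_{11} and M̂ = B̂B̂ᵀ with B̂ the matrix obtained from B by deleting its first row and column. -/
/-!
Write `a = B₁₁`, `b = B₂₁` and `c = b e₁`, the first column of `B` below the diagonal. Since the
first row of `B` is `a e₁ᵀ`, the first row and column of `M = BBᵀ` are `a²` and `a c`, and its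
lower-right block is `M̂ + c cᵀ`. The Schur complement formula for the corner entry of an inverse
gives `R₁₁ = 1 / (a² - z - a² cᵀ (M̂ + c cᵀ - z)⁻¹ c)`, and the Sherman–Morrison formula turns
`cᵀ (M̂ + c cᵀ - z)⁻¹ c` into `q / (1 + q)` with `q = cᵀ (M̂ - z)⁻¹ c = b² R̂₁₁`. Every matrix
inverted along the way is a real symmetric matrix minus `z`, invertible because `Im z ≠ 0`.
-/

namespace Matrix

theorem IsHermitian.isUnit_det_sub_smul_one {n 𝕜 : Type*} [Fintype n] [DecidableEq n] [RCLike 𝕜]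
    {A : Matrix n n 𝕜} (hA : A.IsHermitian) {z : 𝕜} (hz : RCLike.im z ≠ 0) :
    IsUnit (A - z • 1).det := by
  have hz_spec : z ∉ spectrum 𝕜 A := by
    rw [hA.spectrum_eq_image_range]
    rintro ⟨x, -, rfl⟩
    exact hz (RCLike.ofReal_im x)
  rw [← isUnit_iff_isUnit_det, ← neg_sub, IsUnit.neg_iff, ← Algebra.algebraMap_eq_smul_one]
  exact spectrum.notMem_iff.mp hz_spec

theorem IsSymm.isUnit_det_map_ofReal_sub_smul_one {n : Type*} [Fintype n] [DecidableEq n]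
    {S : Matrix n n ℝ} (hS : S.IsSymm) {z : ℂ} (hz : z.im ≠ 0) :
    IsUnit (S.map (fun t => (t : ℂ)) - z • 1).det :=
  ((isHermitian_iff_isSymm.mpr hS).map _ fun t => (Complex.conj_ofReal t).symm)
    |>.isUnit_det_sub_smul_one hz

section Field

variable {ι K : Type*} [Fintype ι] [DecidableEq ι] [Field K]

theorem dotProduct_inv_add_vecMulVec_mulVec {A : Matrix ι ι K} (u v : ι → K)
    (hA : IsUnit A.det) (hAuv : IsUnit (A + vecMulVec u v).det) :
    v ⬝ᵥ ((A + vecMulVec u v)⁻¹ *ᵥ u) = v ⬝ᵥ (A⁻¹ *ᵥ u) / (1 + v ⬝ᵥ (A⁻¹ *ᵥ u)) := by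
  set x := (A + vecMulVec u v)⁻¹ *ᵥ u
  set q := v ⬝ᵥ (A⁻¹ *ᵥ u)
  have hx : A *ᵥ x = (1 - v ⬝ᵥ x) • u := by
    have : (A + vecMulVec u v) *ᵥ x = u := by
      rw [mulVec_mulVec, mul_nonsing_inv _ hAuv, one_mulVec]
    rw [add_mulVec, vecMulVec_mulVec, op_smul_eq_smul] at this
    rw [sub_smul, one_smul, eq_sub_iff_add_eq, this]
  have hx' : x = (1 - v ⬝ᵥ x) • (A⁻¹ *ᵥ u) := by
    rw [← mulVec_smul, ← hx, mulVec_mulVec, nonsing_inv_mul _ hA, one_mulVec]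
  have key : v ⬝ᵥ x * (1 + q) = q := by
    have := congrArg (v ⬝ᵥ ·) hx'
    simp only [dotProduct_smul, smul_eq_mul] at this
    linear_combination this
  have hq : 1 + q ≠ 0 := fun h => by
    have : q = 0 := by rw [← key, h, mul_zero]
    simp [this] at h
  exact eq_div_of_mul_eq hq key

theorem inv_apply_zero_zero {k : ℕ} {A : Matrix (Fin (k + 1)) (Fin (k + 1)) K}
    (hA : IsUnit A.det) (hD : IsUnit (A.submatrix Fin.succ Fin.succ).det) :
    A⁻¹ 0 0 = 1 / (A 0 0 - (fun j => A 0 j.succ) ⬝ᵥ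
      ((A.submatrix Fin.succ Fin.succ)⁻¹ *ᵥ fun i => A i.succ 0)) := by
  set D := A.submatrix Fin.succ Fin.succ
  set u : Fin k → K := fun j => A 0 j.succ
  set w : Fin k → K := fun i => A i.succ 0
  set r : Fin k → K := fun j => A⁻¹ 0 j.succ
  have hRA : A⁻¹ * A = 1 := nonsing_inv_mul A hA
  have hrD : r ᵥ* D = -(A⁻¹ 0 0 • u) := by
    ext j
    have := congrFun (congrFun hRA 0) j.succ
    rw [mul_apply, Fin.sum_univ_succ, one_apply_ne (Fin.succ_ne_zero j).symm] at this
    simp only [vecMul, dotProduct, r, D, u, submatrix_apply, Pi.neg_apply, Pi.smul_apply,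
      smul_eq_mul]
    linear_combination this
  have hr : r = -(A⁻¹ 0 0 • (u ᵥ* D⁻¹)) := by
    have : r = (r ᵥ* D) ᵥ* D⁻¹ := by rw [vecMul_vecMul, mul_nonsing_inv _ hD, vecMul_one]
    rw [this, hrD, neg_vecMul, smul_vecMul]
  have hcol : A⁻¹ 0 0 * A 0 0 + r ⬝ᵥ w = 1 := by
    have := congrFun (congrFun hRA 0) 0
    rwa [mul_apply, Fin.sum_univ_succ, one_apply_eq] at this
  refine eq_one_div_of_mul_eq_one_left ?_
  rw [hr, neg_dotProduct, smul_dotProduct, ← dotProduct_mulVec] at hcol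
  linear_combination hcol

theorem inv_sub_smul_one_apply_zero_zero {k : ℕ} {M : Matrix (Fin (k + 1)) (Fin (k + 1)) K}
    {z : K} (hA : IsUnit (M - z • 1).det)
    (hD : IsUnit (M.submatrix Fin.succ Fin.succ - z • 1).det) :
    (M - z • 1)⁻¹ 0 0 = 1 / (M 0 0 - z - (fun j => M 0 j.succ) ⬝ᵥ
      ((M.submatrix Fin.succ Fin.succ - z • 1)⁻¹ *ᵥ fun i => M i.succ 0)) := by
  have hsub : (M - z • 1).submatrix Fin.succ Fin.succ = M.submatrix Fin.succ Fin.succ - z • 1 := by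
    ext i j
    simp [one_apply]
  rw [inv_apply_zero_zero hA (hsub ▸ hD), hsub]
  simp [one_apply_ne (Fin.succ_ne_zero _).symm, one_apply_ne (Fin.succ_ne_zero _)]

end Field

section Semiring

variable {R : Type*} [Semiring R] {k l : ℕ} (B : Matrix (Fin (k + 1)) (Fin (l + 1)) R)

theorem mul_transpose_submatrix_succ_succ :
    (B * Bᵀ).submatrix Fin.succ Fin.succ =
      vecMulVec (fun i => B i.succ 0) (fun i => B i.succ 0) +
        B.submatrix Fin.succ Fin.succ * (B.submatrix Fin.succ Fin.succ)ᵀ := by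
  ext i j
  simp [mul_apply, Fin.sum_univ_succ, vecMulVec_apply]

variable {B}

theorem mul_transpose_apply_zero_left (hB : ∀ j, j ≠ 0 → B 0 j = 0) (i : Fin (k + 1)) :
    (B * Bᵀ) 0 i = B 0 0 * B i 0 := by
  rw [mul_apply, Finset.sum_eq_single 0 (fun j _ hj => by rw [hB j hj, zero_mul]) (by simp)]
  rfl

theorem mul_transpose_apply_zero_right (hB : ∀ j, j ≠ 0 → B 0 j = 0) (i : Fin (k + 1)) :
    (B * Bᵀ) i 0 = B i 0 * B 0 0 := by
  rw [mul_apply, Finset.sum_eq_single 0 (fun j _ hj => by rw [transpose_apply, hB j hj, mul_zero])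
    (by simp)]
  rfl

end Semiring

theorem inv_mul_transpose_sub_smul_one_apply_zero_zero {K : Type*} [Field K] {k : ℕ}
    (B : Matrix (Fin (k + 2)) (Fin (k + 2)) K) (hrow : ∀ j, j ≠ 0 → B 0 j = 0)
    (hcol : ∀ i : Fin (k + 1), i ≠ 0 → B i.succ 0 = 0) (z : K)
    (hA : IsUnit (B * Bᵀ - z • 1).det)
    (hD : IsUnit ((B * Bᵀ).submatrix Fin.succ Fin.succ - z • 1).det)
    (hAh : IsUnit (B.submatrix Fin.succ Fin.succ * (B.submatrix Fin.succ Fin.succ)ᵀ - z • 1).det) :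
    (B * Bᵀ - z • 1)⁻¹ 0 0 =
      1 / (B 0 0 ^ 2 - z - B 0 0 ^ 2 * B 1 0 ^ 2 *
        (B.submatrix Fin.succ Fin.succ * (B.submatrix Fin.succ Fin.succ)ᵀ - z • 1)⁻¹ 0 0 /
        (1 + B 1 0 ^ 2 *
          (B.submatrix Fin.succ Fin.succ * (B.submatrix Fin.succ Fin.succ)ᵀ - z • 1)⁻¹ 0 0)) := by
  set Ah := B.submatrix Fin.succ Fin.succ * (B.submatrix Fin.succ Fin.succ)ᵀ - z • 1
  set c : Fin (k + 1) → K := fun i => B i.succ 0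
  have hc : c = Pi.single 0 (B 1 0) := by
    ext i
    rcases eq_or_ne i 0 with rfl | hi
    · simp [c]
    · simp [c, hcol i hi, hi]
  have hsplit : (B * Bᵀ).submatrix Fin.succ Fin.succ - z • 1 = Ah + vecMulVec c c := by
    rw [mul_transpose_submatrix_succ_succ, add_sub_assoc]
    exact add_comm _ _
  have hu : (fun j => (B * Bᵀ) 0 j.succ) = B 0 0 • c := by
    ext j
    exact mul_transpose_apply_zero_left hrow j.succ
  have hw : (fun i => (B * Bᵀ) i.succ 0) = B 0 0 • c := by
    ext i
    rw [mul_transpose_apply_zero_right hrow, mul_comm]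
    rfl
  have hq : c ⬝ᵥ (Ah⁻¹ *ᵥ c) = B 1 0 ^ 2 * Ah⁻¹ 0 0 := by
    rw [hc, single_dotProduct, mulVec_single]
    simp only [Pi.smul_apply, op_smul_eq_smul, col_apply, smul_eq_mul]
    ring
  rw [inv_sub_smul_one_apply_zero_zero hA hD, hu, hw, hsplit, mulVec_smul, dotProduct_smul,
    smul_dotProduct, dotProduct_inv_add_vecMulVec_mulVec c c hAh (hsplit ▸ hD), hq,
    mul_transpose_apply_zero_left hrow]
  simp only [smul_eq_mul]
  ring

end Matrix

open Matrix


/-- **Resolvent recursion for bidiagonal square matrices.** Let `B` be an `m × m`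
(`m = n + 2`) lower bidiagonal matrix (`B_{ij} = 0` unless `j = i` or `j = i - 1`),
`M = B Bᵀ`, and let `M̂ = B̂ B̂ᵀ` where `B̂` deletes the first row and column of `B`.
Writing `a₁₁ = B₁₁`, `a₂₁ = B₂₁`, `R₁₁ = (M - z)⁻¹₁₁` and `R̂₁₁ = (M̂ - z)⁻¹₁₁`, one has
for `Im z > 0`:
`R₁₁ = 1 / (a₁₁² - z - a₁₁² a₂₁² R̂₁₁ / (1 + a₂₁² R̂₁₁))`. -/
theorem bidiagonal_resolvent_recursion (n : ℕ)
    (B : Matrix (Fin (n + 2)) (Fin (n + 2)) ℝ)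
    (hbi : ∀ i j : Fin (n + 2), ¬(i = j ∨ (i : ℕ) = (j : ℕ) + 1) → B i j = 0)
    (z : ℂ) (hz : 0 < z.im) :
    (((B * Bᵀ).map (fun t => (t : ℂ)) -
        z • (1 : Matrix (Fin (n + 2)) (Fin (n + 2)) ℂ))⁻¹) 0 0 =
      1 / ((B 0 0 : ℂ) ^ 2 - z -
        (B 0 0 : ℂ) ^ 2 * (B 1 0 : ℂ) ^ 2 *
          ((((B.submatrix Fin.succ Fin.succ) * (B.submatrix Fin.succ Fin.succ)ᵀ).map
              (fun t => (t : ℂ)) - z • (1 : Matrix (Fin (n + 1)) (Fin (n + 1)) ℂ))⁻¹) 0 0 /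
          (1 + (B 1 0 : ℂ) ^ 2 *
            ((((B.submatrix Fin.succ Fin.succ) * (B.submatrix Fin.succ Fin.succ)ᵀ).map
                (fun t => (t : ℂ)) -
              z • (1 : Matrix (Fin (n + 1)) (Fin (n + 1)) ℂ))⁻¹) 0 0)) := by
  have hmap : ∀ {k : ℕ} (C : Matrix (Fin k) (Fin k) ℝ),
      (C * Cᵀ).map (fun t => (t : ℂ)) = C.map (↑) * (C.map (↑))ᵀ := fun C => by
    rw [← transpose_map]
    exact Matrix.map_mul (f := Complex.ofRealHom)
  have hrow : ∀ j, j ≠ 0 → B 0 j = 0 := fun j hj =>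
    hbi 0 j (by rintro (h | h); exacts [hj h.symm, by simp at h])
  have hcol : ∀ i : Fin (n + 1), i ≠ 0 → B i.succ 0 = 0 := by
    refine fun i hi => hbi i.succ 0 ?_
    rintro (h | h)
    · exact i.succ_ne_zero h
    · rw [Fin.val_succ, Fin.val_zero] at h
      exact hi (Fin.ext (by simpa using h))
  have hsymm := isSymm_mul_transpose_self B
  have key := inv_mul_transpose_sub_smul_one_apply_zero_zero (B.map (↑))
    (fun j hj => by simp [hrow j hj]) (fun i hi => by simp [hcol i hi]) z
    (hmap B ▸ hsymm.isUnit_det_map_ofReal_sub_smul_one hz.ne')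
    (hmap B ▸ (hsymm.submatrix Fin.succ).isUnit_det_map_ofReal_sub_smul_one hz.ne')
    (hmap _ ▸ (isSymm_mul_transpose_self _).isUnit_det_map_ofReal_sub_smul_one hz.ne')
  rw [hmap, hmap]
  exact key
end
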